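/- Let G be a connected graph with spanning tree T and base vertex u, and let α and c be proper 3-colourings of G in the same component of the reconfiguration graph R_3(G). Then for every edge vw of G, h_{α,u}(c, v) − h_{α,u}(c, w) + w(c, v→w) = w(α, v→w), where h_{α,u}(c, v) = w(c, P_{uv}) − w(α, P_{uv}). -/

import Mathlib

/-- A colouring is proper if adjacent vertices receive different colours. -/
def ProperColouring {V α : Type*} (G : SimpleGraph V) (c : V → α) : Prop :=
  ∀ u v : V, G.Adj u v → c u ≠ c v

/-- A single-vertex recolouring step: the new colouring is proper and differs
from the old one on exactly one vertex. -/
def RecolStep {V α : Type*} (G : SimpleGraph V) (c d : V → α) : Prop :=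
  ProperColouring G d ∧ ∃ x : V, c x ≠ d x ∧ ∀ v : V, v ≠ x → c v = d v

/-- The weight of the oriented edge `x → y` under a 3-colouring `c`: the unique
value in `{-1, 1}` congruent to `c y - c x` modulo 3. -/
def edgeWeight {V : Type*} (c : V → ZMod 3) (x y : V) : ℤ :=
  if c y - c x = 1 then 1 else -1

/-- The weight of an oriented walk: the sum of the weights of its oriented
edges. -/
def walkWeight {V : Type*} {T : SimpleGraph V} (c : V → ZMod 3) {u v : V}
    (p : T.Walk u v) : ℤ :=
  (p.darts.map (fun d => edgeWeight c d.toProd.1 d.toProd.2)).sum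

/-!
Recolouring a single vertex `x` from `s` to `t` changes the weight of every oriented edge
`a → b` by `φ b - φ a`, where `φ` vanishes off `x` and `φ x ∈ {-2, 2}` is congruent to
`t - s` modulo 3. Hence the weight of any walk changes by the difference of `φ` at its
endpoints, and the closed walk `P_{uv}`, `v → w`, `P_{uw}` reversed keeps its weight along
any recolouring sequence from `α` to `c`.
-/

/-- The representative of `t - s` modulo 3 in `{-2, 0, 2}`. -/
def colourShift (s t : ZMod 3) : ℤ :=
  if s = t then 0 else if t - s = 1 then -2 else 2

section

variable {V : Type*}

lemma ProperColouring.mono {α : Type*} {G H : SimpleGraph V} {c : V → α} (hHG : H ≤ G)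
    (hc : ProperColouring G c) : ProperColouring H c :=
  fun a b hab => hc a b (hHG hab)

lemma RecolStep.eq_or_eq_of_adj {G : SimpleGraph V} {c d : V → ZMod 3} (h : RecolStep G c d)
    {a b : V} (hab : G.Adj a b) : c a = d a ∨ c b = d b := by
  obtain ⟨-, x, -, hoff⟩ := h
  by_cases ha : a = x
  · exact Or.inr (hoff b (ha ▸ hab.ne.symm))
  · exact Or.inl (hoff a ha)

lemma edgeWeight_sub_edgeWeight {c d : V → ZMod 3} {a b : V} (hc : c a ≠ c b)
    (hd : d a ≠ d b) (hfix : c a = d a ∨ c b = d b) :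
    edgeWeight d a b - edgeWeight c a b =
      colourShift (c b) (d b) - colourShift (c a) (d a) := by
  unfold edgeWeight colourShift
  revert hc hd hfix
  generalize c a = ca, c b = cb, d a = da, d b = db
  revert ca cb da db
  decide

@[simp]
lemma walkWeight_nil {H : SimpleGraph V} (c : V → ZMod 3) (v : V) :
    walkWeight c (SimpleGraph.Walk.nil : H.Walk v v) = 0 := rfl

@[simp]
lemma walkWeight_cons {H : SimpleGraph V} (c : V → ZMod 3) {a b t : V} (h : H.Adj a b)
    (q : H.Walk b t) :
    walkWeight c (SimpleGraph.Walk.cons h q) = edgeWeight c a b + walkWeight c q := by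
  simp [walkWeight]

lemma walkWeight_sub_walkWeight {H : SimpleGraph V} {c d : V → ZMod 3}
    (hc : ProperColouring H c) (hd : ProperColouring H d)
    (hfix : ∀ a b, H.Adj a b → c a = d a ∨ c b = d b) {s t : V} (q : H.Walk s t) :
    walkWeight d q - walkWeight c q = colourShift (c t) (d t) - colourShift (c s) (d s) := by
  induction q with
  | nil => simp
  | @cons a b t h q ih =>
    have hedge := edgeWeight_sub_edgeWeight (hc a b h) (hd a b h) (hfix a b h)
    simp only [walkWeight_cons]
    linarith

lemma RecolStep.cycleWeight_eq {G H : SimpleGraph V} {c d : V → ZMod 3} (hHG : H ≤ G)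
    (hc : ProperColouring G c) (hstep : RecolStep G c d) {u v w : V}
    (qv : H.Walk u v) (qw : H.Walk u w) (hvw : G.Adj v w) :
    walkWeight d qv + edgeWeight d v w - walkWeight d qw =
      walkWeight c qv + edgeWeight c v w - walkWeight c qw := by
  have hfix : ∀ a b, H.Adj a b → c a = d a ∨ c b = d b :=
    fun a b hab => hstep.eq_or_eq_of_adj (hHG hab)
  have hv := walkWeight_sub_walkWeight (hc.mono hHG) (hstep.1.mono hHG) hfix qv
  have hw := walkWeight_sub_walkWeight (hc.mono hHG) (hstep.1.mono hHG) hfix qw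
  have he := edgeWeight_sub_edgeWeight (hc v w hvw) (hstep.1 v w hvw)
    (hstep.eq_or_eq_of_adj hvw)
  linarith

end

theorem stmt_10_general {V : Type*} (G T : SimpleGraph V) (hTG : T ≤ G)
    (u : V) (p : ∀ v : V, T.Path u v) (α c : V → ZMod 3)
    (hα : ProperColouring G α)
    (hreach : Relation.ReflTransGen (RecolStep G) α c) :
    ∀ v w : V, G.Adj v w →
      (walkWeight c ((p v : T.Walk u v)) - walkWeight α ((p v : T.Walk u v))) -
        (walkWeight c ((p w : T.Walk u w)) - walkWeight α ((p w : T.Walk u w))) +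
          edgeWeight c v w = edgeWeight α v w := by
  intro v w hvw
  have hinv : ProperColouring G c ∧
      walkWeight c (p v : T.Walk u v) + edgeWeight c v w - walkWeight c (p w : T.Walk u w) =
        walkWeight α (p v : T.Walk u v) + edgeWeight α v w -
          walkWeight α (p w : T.Walk u w) := by
    induction hreach with
    | refl => exact ⟨hα, rfl⟩
    | tail _ hstep ih =>
      exact ⟨hstep.1, (hstep.cycleWeight_eq hTG ih.1 _ _ hvw).trans ih.2⟩
  linarith [hinv.2]

/-- if proper 3-colourings `α` and `c` of a connected graph `G`
(with spanning tree `T`, base vertex `u`, tree paths `p v` from `u` to `v`) lie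
in the same component of `R₃(G)`, then for every edge `vw` of `G`,
`h_{α,u}(c,v) - h_{α,u}(c,w) + w(c, v→w) = w(α, v→w)`, where
`h_{α,u}(c,v) = w(c, P_{uv}) - w(α, P_{uv})`. -/
theorem stmt_10 {V : Type*} (G T : SimpleGraph V) (hT : T.IsTree) (hTG : T ≤ G)
    (u : V) (p : ∀ v : V, T.Path u v) (α c : V → ZMod 3)
    (hα : ProperColouring G α)
    (hreach : Relation.ReflTransGen (RecolStep G) α c) :
    ∀ v w : V, G.Adj v w →
      (walkWeight c ((p v : T.Walk u v)) - walkWeight α ((p v : T.Walk u v))) -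
        (walkWeight c ((p w : T.Walk u w)) - walkWeight α ((p w : T.Walk u w))) +
          edgeWeight c v w = edgeWeight α v w :=
  stmt_10_general G T hTG u p α c hα hreach
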